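/- arXiv:math/9808038 — 2 statements merged into one kernel-verified Lean document; each statement's English description precedes it below -/
import Mathlib

section
/- Let $d, n \geq 1$ and let $v, w$ be compositions of $d$ into $n$ parts (i.e. $v, w \in \mathbb{N}^n$ with $\sum_i v_i = \sum_j w_j = d$). Write $\bar v_i = v_1 + \cdots + v_i$ and $\bar w_j = w_1 + \cdots + w_j$. For a permutation $\sigma \in \mathfrak{S}_d$ of $\{1,\dots,d\}$, define the $n \times n$ matrix $A(\sigma)$ with entries $a_{ij}(\sigma) = \#\{k : \bar w_{j-1} < k \leq \bar w_j \text{ and } \bar v_{i-1} < \sigma(k) \leq \bar v_i\}$. Then (1) $A(\sigma) \in \mathbf{M}(v,w)$, i.e. $A(\sigma)$ has nonnegative integer entries with $i$-th row sum $v_i$ and $j$-th column sum $w_j$; (2) $A(\sigma) = A(\tau)$ whenever $\sigma$ and $\tau$ lie in the same double coset $\mathfrak{S}^{(v)} \sigma \mathfrak{S}^{(w)}$; and (3) the induced map from the set of double cosets $\mathfrak{S}^{(v)} \backslash \mathfrak{S}_d / \mathfrak{S}^{(w)}$ to $\mathbf{M}(v,w)$ is a bijection. -/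
open Finset

/-- Partial sum `v₁ + ⋯ + vᵢ` of a composition `v : Fin n → ℕ`
(here `psum v i = ∑_{i' < i} v i'`, with indices `0`-based). -/
def psum {n : ℕ} (v : Fin n → ℕ) (i : ℕ) : ℕ :=
  ∑ i' ∈ Finset.univ.filter (fun i' : Fin n => (i' : ℕ) < i), v i'

/-- `k ∈ {0, …, d-1}` lies in the `i`-th block of the composition `v` of `d`,
i.e. `v₁ + ⋯ + vᵢ ≤ k + 1 ≤ v₁ + ⋯ + v_{i+1}` in `1`-based notation. -/
def inBlock {n d : ℕ} (v : Fin n → ℕ) (i : Fin n) (k : Fin d) : Prop :=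
  psum v i.val ≤ k.val ∧ k.val < psum v (i.val + 1)

instance {n d : ℕ} (v : Fin n → ℕ) (i : Fin n) (k : Fin d) : Decidable (inBlock v i k) := by
  unfold inBlock; infer_instance

/-- The Young subgroup `𝔖^{(v)} ⊆ 𝔖_d` of permutations preserving each block of `v`
(as a set of permutations). -/
def YoungSet {n d : ℕ} (v : Fin n → ℕ) : Set (Equiv.Perm (Fin d)) :=
  {σ | ∀ (i : Fin n) (k : Fin d), inBlock v i k → inBlock v i (σ k)}

/-- The matrix `A(σ)` attached to a permutation `σ ∈ 𝔖_d`: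
`a_{ij}(σ) = #{k in the j-th block of w such that σ(k) lies in the i-th block of v}`. -/
def matOf {n d : ℕ} (v w : Fin n → ℕ) (σ : Equiv.Perm (Fin d)) : Fin n → Fin n → ℕ :=
  fun i j => (Finset.univ.filter fun k : Fin d => inBlock w j k ∧ inBlock v i (σ k)).card

section Aux

variable {n d : ℕ} (v : Fin n → ℕ)

lemma psum_mono {a b : ℕ} (h : a ≤ b) : psum v a ≤ psum v b := by
  apply Finset.sum_le_sum_of_subset
  intro x hx
  simp only [Finset.mem_filter, Finset.mem_univ, true_and] at hx ⊢
  omega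

lemma psum_succ {i : ℕ} (hi : i < n) :
    psum v (i+1) = psum v i + v ⟨i, hi⟩ := by
  have hins : Finset.univ.filter (fun i' : Fin n => (i':ℕ) < i+1)
      = insert ⟨i, hi⟩ (Finset.univ.filter (fun i' : Fin n => (i':ℕ) < i)) := by
    ext x; simp [Fin.ext_iff]; omega
  rw [psum, hins, Finset.sum_insert (by simp), psum, Nat.add_comm]

lemma psum_top : psum v n = ∑ i, v i := by
  unfold psum
  rw [Finset.filter_true_of_mem (fun x _ => x.isLt)]

lemma inBlock_unique {i i' : Fin n} {k : Fin d} (h : inBlock v i k) (h' : inBlock v i' k) :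
    i = i' := by
  rcases lt_trichotomy (i : ℕ) (i' : ℕ) with hlt | heq | hgt
  · exfalso
    have hm := psum_mono v (show (i:ℕ)+1 ≤ (i':ℕ) from hlt)
    obtain ⟨_, h2⟩ := h; obtain ⟨h3, _⟩ := h'; omega
  · exact Fin.ext heq
  · exfalso
    have hm := psum_mono v (show (i':ℕ)+1 ≤ (i:ℕ) from hgt)
    obtain ⟨h2, _⟩ := h; obtain ⟨_, h3⟩ := h'; omega

lemma inBlock_exists (hv : ∑ i, v i = d) (k : Fin d) : ∃ i : Fin n, inBlock v i k := by
  classical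
  have hdn : psum v n = d := by rw [psum_top, hv]
  have hn0 : 0 < n := by
    by_contra hcon
    have hn : n = 0 := by omega
    subst hn
    have h0 : psum v 0 = d := hdn
    simp [psum] at h0
    exact absurd k.isLt (by omega)
  have hex : ∃ m, (k:ℕ) < psum v (m+1) := ⟨n-1, by
    have h1 : n - 1 + 1 = n := by omega
    rw [h1, hdn]; exact k.isLt⟩
  have hspec : (k:ℕ) < psum v (Nat.find hex + 1) := Nat.find_spec hex
  have hle : Nat.find hex ≤ n - 1 := Nat.find_min' hex (by
    have h1 : n - 1 + 1 = n := by omega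
    rw [h1, hdn]; exact k.isLt)
  have hi0n : Nat.find hex < n := by omega
  refine ⟨⟨Nat.find hex, hi0n⟩, ?_, hspec⟩
  show psum v (Nat.find hex) ≤ (k:ℕ)
  rcases Nat.eq_zero_or_pos (Nat.find hex) with h0 | h0
  · rw [h0]; simp [psum]
  · have hmin : ¬ (k:ℕ) < psum v ((Nat.find hex - 1)+1) := Nat.find_min hex (by omega)
    have h1 : Nat.find hex - 1 + 1 = Nat.find hex := by omega
    rw [h1] at hmin; omega

noncomputable def blk (hv : ∑ i, v i = d) (k : Fin d) : Fin n :=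
  (inBlock_exists v hv k).choose

lemma blk_spec (hv : ∑ i, v i = d) (k : Fin d) : inBlock v (blk v hv k) k :=
  (inBlock_exists v hv k).choose_spec

lemma blk_eq_iff (hv : ∑ i, v i = d) {i : Fin n} {k : Fin d} :
    blk v hv k = i ↔ inBlock v i k := by
  constructor
  · rintro rfl; exact blk_spec v hv k
  · intro h; exact inBlock_unique v (blk_spec v hv k) h

lemma card_blk (hv : ∑ i, v i = d) (i : Fin n) :
    (univ.filter fun k : Fin d => blk v hv k = i).card = v i := by
  have hb : psum v (i.val+1) ≤ d := by
    have h1 := psum_mono v (Nat.succ_le_of_lt i.isLt)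
    rw [psum_top, hv] at h1; exact h1
  have heq : (univ.filter fun k : Fin d => blk v hv k = i)
      = (Finset.Ico (psum v i.val) (psum v (i.val+1))).attachFin
        (fun m hm => lt_of_lt_of_le (Finset.mem_Ico.mp hm).2 hb) := by
    ext k
    simp only [Finset.mem_filter, Finset.mem_univ, true_and, Finset.mem_attachFin,
      Finset.mem_Ico, blk_eq_iff v hv, inBlock]
  rw [heq, Finset.card_attachFin, Nat.card_Ico, psum_succ v i.isLt]
  simp

lemma young_iff (hv : ∑ i, v i = d) {p : Equiv.Perm (Fin d)} (hp : p ∈ YoungSet v)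
    (i : Fin n) (k : Fin d) : inBlock v i (p k) ↔ inBlock v i k := by
  constructor
  · intro h
    have hk := blk_spec v hv k
    have h2 : inBlock v (blk v hv k) (p k) := hp _ k hk
    have h3 : i = blk v hv k := inBlock_unique v h h2
    rw [h3]; exact hk
  · exact hp i k

lemma young_inv (hv : ∑ i, v i = d) {p : Equiv.Perm (Fin d)} (hp : p ∈ YoungSet v) :
    p⁻¹ ∈ YoungSet v := by
  intro i k hk
  have h2 := young_iff v hv hp i (p⁻¹ k)
  rw [Equiv.Perm.coe_inv, Equiv.apply_symm_apply] at h2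
  exact h2.mp hk

end Aux

/-- Coloring with prescribed fiber cardinalities. -/
lemma exists_coloring {α ι : Type*} [Fintype α] [DecidableEq α] [Fintype ι] [DecidableEq ι]
    (c : ι → ℕ) (h : ∑ i, c i = Fintype.card α) :
    ∃ f : α → ι, ∀ i, (univ.filter fun a => f a = i).card = c i := by
  have hcard : Fintype.card (Σ i : ι, Fin (c i)) = Fintype.card α := by
    simp [Fintype.card_sigma, h]
  obtain ⟨e⟩ := Fintype.card_eq.mp hcard
  refine ⟨fun a => (e.symm a).1, fun i => ?_⟩
  have key : (univ.filter fun s : Σ j : ι, Fin (c j) => s.1 = i).card = c i := by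
    have hs : (univ.filter fun s : Σ j : ι, Fin (c j) => s.1 = i)
        = ({i} : Finset ι).sigma (fun j => (univ : Finset (Fin (c j)))) := by
      ext s; simp [Finset.mem_sigma]
    rw [hs, Finset.card_sigma]; simp
  calc (univ.filter fun a => (e.symm a).1 = i).card
      = Fintype.card {a // (e.symm a).1 = i} := (Fintype.card_subtype _).symm
    _ = Fintype.card {s : Σ j : ι, Fin (c j) // s.1 = i} :=
        Fintype.card_congr (Equiv.subtypeEquiv e.symm (fun a => Iff.rfl))
    _ = (univ.filter fun s : Σ j : ι, Fin (c j) => s.1 = i).card := Fintype.card_subtype _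
    _ = c i := key

/-- Permutation matching two colorings with equal fiber cardinalities. -/
lemma exists_perm_of_fiber_cards {α ι : Type*} [Fintype α] [DecidableEq α] [DecidableEq ι]
    (f g : α → ι)
    (h : ∀ i, (univ.filter fun a => f a = i).card = (univ.filter fun a => g a = i).card) :
    ∃ π : Equiv.Perm α, ∀ a, g (π a) = f a := by
  have hfib : ∀ i : ι, Nonempty ({a // f a = i} ≃ {a // g a = i}) := fun i =>
    Fintype.card_eq.mp (by rw [Fintype.card_subtype, Fintype.card_subtype, h])
  let E : (Σ i : ι, {a // f a = i}) ≃ (Σ i : ι, {a // g a = i}) :=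
    Equiv.sigmaCongrRight (fun i => (hfib i).some)
  refine ⟨(Equiv.sigmaFiberEquiv f).symm.trans (E.trans (Equiv.sigmaFiberEquiv g)), fun a => ?_⟩
  show g ((Equiv.sigmaFiberEquiv g) (E ((Equiv.sigmaFiberEquiv f).symm a))) = f a
  set s := E ((Equiv.sigmaFiberEquiv f).symm a) with hs
  have h1 : s.1 = f a := rfl
  have h2 : (Equiv.sigmaFiberEquiv g) s = s.2.1 := rfl
  rw [h2, s.2.2, h1]

/-- For compositions `v, w` of `d` into `n` parts:
(1) `A(σ)` has row sums `v` and column sums `w`, i.e. `A(σ) ∈ 𝐌(v,w)`;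
(2) `A(σ)` only depends on the double coset `𝔖^{(v)} σ 𝔖^{(w)}`;
(3) the induced map `𝔖^{(v)} \ 𝔖_d / 𝔖^{(w)} → 𝐌(v,w)` is a bijection
    (surjectivity and injectivity stated separately). -/
theorem doubleCosets_biject_with_matrices
    (n d : ℕ) (hn : 1 ≤ n) (hd : 1 ≤ d) (v w : Fin n → ℕ)
    (hv : ∑ i, v i = d) (hw : ∑ j, w j = d) :
    (∀ σ : Equiv.Perm (Fin d),
        (∀ i, ∑ j, matOf v w σ i j = v i) ∧ (∀ j, ∑ i, matOf v w σ i j = w j)) ∧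
    (∀ σ p q : Equiv.Perm (Fin d), p ∈ YoungSet v → q ∈ YoungSet w →
        matOf v w (p * σ * q) = matOf v w σ) ∧
    (∀ A : Fin n → Fin n → ℕ, (∀ i, ∑ j, A i j = v i) → (∀ j, ∑ i, A i j = w j) →
        ∃ σ : Equiv.Perm (Fin d), matOf v w σ = A) ∧
    (∀ σ τ : Equiv.Perm (Fin d), matOf v w σ = matOf v w τ →
        ∃ p ∈ YoungSet v, ∃ q ∈ YoungSet w, τ = p * σ * q) := by
  classical
  have matOf_blk : ∀ (σ : Equiv.Perm (Fin d)) (i j : Fin n),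
      matOf v w σ i j
        = (univ.filter fun k : Fin d => blk w hw k = j ∧ blk v hv (σ k) = i).card := by
    intro σ i j
    apply congrArg Finset.card
    ext k
    simp only [Finset.mem_filter, Finset.mem_univ, true_and, blk_eq_iff, matOf]
  refine ⟨?_, ?_, ?_, ?_⟩
  · -- (1) row and column sums
    intro σ
    constructor
    · intro i
      have h1 : ∀ j, matOf v w σ i j
          = ((univ.filter fun k : Fin d => blk v hv (σ k) = i).filter
              fun k => blk w hw k = j).card := by
        intro j
        rw [matOf_blk σ i j, Finset.filter_filter]
        apply congrArg Finset.card
        apply Finset.filter_congr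
        intro k _; tauto
      calc ∑ j, matOf v w σ i j
          = ∑ j, ((univ.filter fun k : Fin d => blk v hv (σ k) = i).filter
              fun k => blk w hw k = j).card := Finset.sum_congr rfl (fun j _ => h1 j)
        _ = (univ.filter fun k : Fin d => blk v hv (σ k) = i).card :=
            (Finset.card_eq_sum_card_fiberwise (fun k _ => Finset.mem_univ (blk w hw k))).symm
        _ = (univ.filter fun m : Fin d => blk v hv m = i).card := by
            have hmap : (univ.filter fun k : Fin d => blk v hv (σ k) = i)
                = (univ.filter fun m : Fin d => blk v hv m = i).map σ.symm.toEmbedding := by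
              ext k
              simp [Finset.mem_map_equiv]
            rw [hmap, Finset.card_map]
        _ = v i := card_blk v hv i
    · intro j
      have h1 : ∀ i, matOf v w σ i j
          = ((univ.filter fun k : Fin d => blk w hw k = j).filter
              fun k => blk v hv (σ k) = i).card := by
        intro i
        rw [matOf_blk σ i j, Finset.filter_filter]
      calc ∑ i, matOf v w σ i j
          = ∑ i, ((univ.filter fun k : Fin d => blk w hw k = j).filter
              fun k => blk v hv (σ k) = i).card := Finset.sum_congr rfl (fun i _ => h1 i)
        _ = (univ.filter fun k : Fin d => blk w hw k = j).card :=
            (Finset.card_eq_sum_card_fiberwise (fun k _ => Finset.mem_univ (blk v hv (σ k)))).symm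
        _ = w j := card_blk w hw j
  · -- (2) invariance on double cosets
    intro σ p q hp hq
    funext i j
    show (univ.filter fun k : Fin d => inBlock w j k ∧ inBlock v i ((p * σ * q) k)).card
        = (univ.filter fun k : Fin d => inBlock w j k ∧ inBlock v i (σ k)).card
    have hmap : (univ.filter fun k : Fin d => inBlock w j k ∧ inBlock v i ((p * σ * q) k))
        = (univ.filter fun m : Fin d => inBlock w j m ∧ inBlock v i (σ m)).map
            q.symm.toEmbedding := by
      ext k
      have happ : (p * σ * q) k = p (σ (q k)) := rfl
      simp only [Finset.mem_filter, Finset.mem_univ, true_and, Finset.mem_map_equiv,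
        Equiv.symm_symm, happ, young_iff v hv hp, young_iff w hw hq]
    rw [hmap, Finset.card_map]
  · -- (3) surjectivity
    intro A hrow hcol
    have hsum : ∑ p : Fin n × Fin n, A p.1 p.2 = Fintype.card (Fin d) := by
      rw [Fintype.card_fin, Fintype.sum_prod_type]
      calc ∑ a, ∑ b, A a b = ∑ a, v a := Finset.sum_congr rfl (fun a _ => hrow a)
        _ = d := hv
    obtain ⟨h0, hh0⟩ := exists_coloring (fun p : Fin n × Fin n => A p.1 p.2) hsum
    -- fiber cards of snd ∘ h0 agree with blocks of w
    have hsnd : ∀ j, (univ.filter fun k : Fin d => (h0 k).2 = j).card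
        = (univ.filter fun k : Fin d => blk w hw k = j).card := by
      intro j
      rw [card_blk w hw j]
      have hstep : (univ.filter fun k : Fin d => (h0 k).2 = j).card
          = ∑ i, (univ.filter fun k : Fin d => h0 k = (i, j)).card := by
        rw [Finset.card_eq_sum_card_fiberwise
          (f := fun k => (h0 k).1) (t := univ) (fun k _ => Finset.mem_univ _)]
        apply Finset.sum_congr rfl
        intro i _
        apply congrArg Finset.card
        rw [Finset.filter_filter]
        apply Finset.filter_congr
        intro k _
        simp [Prod.ext_iff]
        tauto
      rw [hstep]
      calc ∑ i, (univ.filter fun k : Fin d => h0 k = (i, j)).card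
          = ∑ i, A i j := Finset.sum_congr rfl (fun i _ => hh0 (i, j))
        _ = w j := hcol j
    have hfst : ∀ i, (univ.filter fun k : Fin d => (h0 k).1 = i).card
        = (univ.filter fun k : Fin d => blk v hv k = i).card := by
      intro i
      rw [card_blk v hv i]
      have hstep : (univ.filter fun k : Fin d => (h0 k).1 = i).card
          = ∑ j, (univ.filter fun k : Fin d => h0 k = (i, j)).card := by
        rw [Finset.card_eq_sum_card_fiberwise
          (f := fun k => (h0 k).2) (t := univ) (fun k _ => Finset.mem_univ _)]
        apply Finset.sum_congr rfl
        intro j _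
        apply congrArg Finset.card
        rw [Finset.filter_filter]
        apply Finset.filter_congr
        intro k _
        simp [Prod.ext_iff]
      rw [hstep]
      calc ∑ j, (univ.filter fun k : Fin d => h0 k = (i, j)).card
          = ∑ j, A i j := Finset.sum_congr rfl (fun j _ => hh0 (i, j))
        _ = v i := hrow i
    obtain ⟨π, hπ⟩ := exists_perm_of_fiber_cards (fun k => (h0 k).2) (blk w hw) hsnd
    obtain ⟨ρ, hρ⟩ := exists_perm_of_fiber_cards (fun k => (h0 k).1) (blk v hv) hfst
    set f1 : Fin d → Fin n × Fin n := fun k => h0 (π.symm k) with hf1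
    set g1 : Fin d → Fin n × Fin n := fun k => h0 (ρ.symm k) with hg1
    have hf1w : ∀ k, blk w hw k = (f1 k).2 := by
      intro k
      have := hπ (π.symm k)
      simpa using this
    have hg1v : ∀ k, blk v hv k = (g1 k).1 := by
      intro k
      have := hρ (ρ.symm k)
      simpa using this
    have hf1card : ∀ c : Fin n × Fin n,
        (univ.filter fun k => f1 k = c).card = A c.1 c.2 := by
      intro c
      have hmap : (univ.filter fun k : Fin d => f1 k = c)
          = (univ.filter fun k : Fin d => h0 k = c).map π.toEmbedding := by
        ext k
        simp [Finset.mem_map_equiv, hf1]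
      rw [hmap, Finset.card_map, hh0]
    have hg1card : ∀ c : Fin n × Fin n,
        (univ.filter fun k => g1 k = c).card = A c.1 c.2 := by
      intro c
      have hmap : (univ.filter fun k : Fin d => g1 k = c)
          = (univ.filter fun k : Fin d => h0 k = c).map ρ.toEmbedding := by
        ext k
        simp [Finset.mem_map_equiv, hg1]
      rw [hmap, Finset.card_map, hh0]
    obtain ⟨σ, hσ⟩ := exists_perm_of_fiber_cards f1 g1
      (fun c => by rw [hf1card c, hg1card c])
    refine ⟨σ, ?_⟩
    funext i j
    rw [matOf_blk σ i j, ← hf1card (i, j)]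
    apply congrArg Finset.card
    ext k
    simp only [Finset.mem_filter, Finset.mem_univ, true_and]
    constructor
    · rintro ⟨hbw, hbv⟩
      have h1 : (f1 k).2 = j := by rw [← hf1w k]; exact hbw
      have h2 : (f1 k).1 = i := by
        have := hg1v (σ k)
        rw [hσ k] at this
        rw [← this]; exact hbv
      exact Prod.ext h2 h1
    · intro hk
      constructor
      · rw [hf1w k, hk]
      · rw [hg1v (σ k), hσ k, hk]
  · -- (4) injectivity
    intro σ τ hmat
    set f : Fin d → Fin n × Fin n := fun k => (blk v hv (σ k), blk w hw k) with hf
    set g : Fin d → Fin n × Fin n := fun k => (blk v hv (τ k), blk w hw k) with hg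
    have hfib : ∀ c : Fin n × Fin n,
        (univ.filter fun k => f k = c).card = (univ.filter fun k => g k = c).card := by
      intro c
      have e1 : (univ.filter fun k : Fin d => f k = c)
          = (univ.filter fun k : Fin d => blk w hw k = c.2 ∧ blk v hv (σ k) = c.1) := by
        apply Finset.filter_congr
        intro k _
        simp [hf, Prod.ext_iff]
        tauto
      have e2 : (univ.filter fun k : Fin d => g k = c)
          = (univ.filter fun k : Fin d => blk w hw k = c.2 ∧ blk v hv (τ k) = c.1) := by
        apply Finset.filter_congr
        intro k _
        simp [hg, Prod.ext_iff]
        tauto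
      rw [e1, e2, ← matOf_blk σ c.1 c.2, ← matOf_blk τ c.1 c.2, hmat]
    obtain ⟨π, hπ⟩ := exists_perm_of_fiber_cards f g hfib
    have hπ1 : ∀ k, blk v hv (τ (π k)) = blk v hv (σ k) := fun k => congrArg Prod.fst (hπ k)
    have hπ2 : ∀ k, blk w hw (π k) = blk w hw k := fun k => congrArg Prod.snd (hπ k)
    have hπY : π ∈ YoungSet w := by
      intro j k hk
      rw [← blk_eq_iff w hw] at hk ⊢
      rw [hπ2 k, hk]
    have hpY : (τ * π * σ⁻¹) ∈ YoungSet v := by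
      intro i m hm
      rw [← blk_eq_iff v hv] at hm ⊢
      have happ : (τ * π * σ⁻¹) m = τ (π (σ⁻¹ m)) := rfl
      rw [happ, hπ1 (σ⁻¹ m), Equiv.Perm.coe_inv, Equiv.apply_symm_apply, hm]
    refine ⟨τ * π * σ⁻¹, hpY, π⁻¹, young_inv w hw hπY, ?_⟩
    group
end

section
/- Let $a \geq 1$ and $0 \leq s \leq a$, and let $f$ be a Laurent polynomial in $\mathbb{C}(q)[y_1^{\pm 1}, \dots, y_a^{\pm 1}]$ that is invariant under the subgroup $\mathfrak{S}_s \times \mathfrak{S}_{a-s}$ of $\mathfrak{S}_a$ permuting the first $s$ and the last $a-s$ variables separately. Then the full symmetrization $\mathfrak{S}\Big(f \prod_{t=1}^{s} \prod_{u=s+1}^{a} \frac{y_t - q^2 y_u}{y_t - y_u}\Big) = \sum_{\sigma \in \mathfrak{S}_a} \sigma \cdot \Big(f \prod_{t \leq s < u} \frac{y_t - q^2 y_u}{y_t - y_u}\Big)$, a priori an element of the field $\mathbb{C}(q)(y_1,\dots,y_a)$, is in fact a symmetric Laurent polynomial, i.e. lies in $\mathbb{C}(q)[y_1^{\pm 1},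 \dots, y_a^{\pm 1}]^{\mathfrak{S}_a}$. -/
open Finset MvPolynomial

/-- The field `ℂ(q)(y₁, …, y_a)` of rational functions in `a` variables over `ℂ(q)`. -/
noncomputable abbrev FF (a : ℕ) : Type := FractionRing (MvPolynomial (Fin a) (RatFunc ℂ))

/-- The action of a permutation `σ ∈ 𝔖_a` on `ℂ(q)(y₁, …, y_a)`, permuting the variables. -/
noncomputable def permAct {a : ℕ} (σ : Equiv.Perm (Fin a)) : FF a ≃+* FF a :=
  IsFractionRing.ringEquivOfRingEquiv (renameEquiv (RatFunc ℂ) σ).toRingEquiv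

/-- The variable `y_i` viewed in `ℂ(q)(y₁, …, y_a)`. -/
noncomputable def yv {a : ℕ} (i : Fin a) : FF a :=
  algebraMap (MvPolynomial (Fin a) (RatFunc ℂ)) (FF a) (X i)

/-- The indeterminate `q` viewed in `ℂ(q)(y₁, …, y_a)`. -/
noncomputable def qv {a : ℕ} : FF a :=
  algebraMap (MvPolynomial (Fin a) (RatFunc ℂ)) (FF a) (C RatFunc.X)

/-- The coefficient field `ℂ(q)` embedded in `ℂ(q)(y₁, …, y_a)`. -/
noncomputable def coeffMap {a : ℕ} : RatFunc ℂ →+* FF a :=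
  (algebraMap (MvPolynomial (Fin a) (RatFunc ℂ)) (FF a)).comp MvPolynomial.C

/-- The subring `ℂ(q)[y₁^{±1}, …, y_a^{±1}]` of Laurent polynomials with coefficients in
`ℂ(q)`, inside the field `ℂ(q)(y₁, …, y_a)`. -/
noncomputable def LaurentSub (a : ℕ) : Subring (FF a) :=
  Subring.closure (Set.range coeffMap ∪ ⋃ i : Fin a, {yv i, (yv i)⁻¹})

set_option synthInstance.maxHeartbeats 1000000
set_option maxHeartbeats 4000000

abbrev Rr (a : ℕ) := MvPolynomial (Fin a) (RatFunc ℂ)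
noncomputable def im {a : ℕ} : Rr a →+* FF a := algebraMap _ _

lemma im_inj {a : ℕ} : Function.Injective (im (a := a)) := IsFractionRing.injective _ _

lemma permAct_im {a : ℕ} (σ : Equiv.Perm (Fin a)) (p : Rr a) :
    permAct σ (im p) = im (rename σ p) :=
  IsFractionRing.ringEquivOfRingEquiv_algebraMap _ p

lemma permAct_permAct {a : ℕ} (τ σ : Equiv.Perm (Fin a)) (x : FF a) :
    permAct τ (permAct σ x) = permAct (τ * σ) x := by
  have h : ((permAct τ).toRingHom.comp (permAct σ).toRingHom) = (permAct (τ*σ)).toRingHom := by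
    apply IsLocalization.ringHom_ext (nonZeroDivisors (Rr a))
    refine RingHom.ext fun p => ?_
    show permAct τ (permAct σ (im p)) = permAct (τ * σ) (im p)
    rw [permAct_im, permAct_im, permAct_im, rename_rename]
    rfl
  exact congrFun (congrArg DFunLike.coe h) x

lemma permAct_yv {a : ℕ} (σ : Equiv.Perm (Fin a)) (i : Fin a) :
    permAct σ (yv i) = yv (σ i) := by
  show permAct σ (im (X i)) = im (X (σ i))
  rw [permAct_im, rename_X]

lemma permAct_qv {a : ℕ} (σ : Equiv.Perm (Fin a)) : permAct σ (qv : FF a) = qv := by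
  show permAct σ (im (C RatFunc.X)) = im (C RatFunc.X)
  rw [permAct_im, rename_C]

lemma im_mem_laurent {a : ℕ} (p : Rr a) : im p ∈ LaurentSub a := by
  induction p using MvPolynomial.induction_on with
  | C r =>
      exact Subring.subset_closure (Or.inl ⟨r, rfl⟩)
  | add p q hp hq => rw [map_add]; exact add_mem hp hq
  | mul_X p i hp =>
      rw [map_mul]
      refine mul_mem hp (Subring.subset_closure (Or.inr ?_))
      exact Set.mem_iUnion.2 ⟨i, Or.inl rfl⟩

lemma yv_inv_mem_laurent {a : ℕ} (i : Fin a) : (yv i)⁻¹ ∈ LaurentSub a :=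
  Subring.subset_closure (Or.inr (Set.mem_iUnion.2 ⟨i, Or.inr rfl⟩))

lemma yv_ne_zero {a : ℕ} (i : Fin a) : (yv i : FF a) ≠ 0 := by
  show im (X i) ≠ 0
  rw [ne_eq, map_eq_zero_iff _ im_inj]
  exact X_ne_zero i

lemma exists_clear_denom {a : ℕ} {x : FF a} (hx : x ∈ LaurentSub a) :
    ∃ (N : ℕ) (p : Rr a), x * im ((∏ i, X i) ^ N) = im p := by
  induction hx using Subring.closure_induction with
  | mem y hy =>
      rcases hy with ⟨r, rfl⟩ | hy
      · exact ⟨0, C r, by simp [coeffMap, im]⟩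
      · rw [Set.mem_iUnion] at hy
        obtain ⟨i, hy⟩ := hy
        rcases hy with rfl | rfl
        · exact ⟨0, X i, by simp [yv, im]⟩
        · refine ⟨1, ∏ j ∈ univ.erase i, X j, ?_⟩
          rw [pow_one, ← Finset.mul_prod_erase (univ) X (mem_univ i), map_mul]
          rw [show (im (X i) : FF a) = yv i from rfl]
          rw [← mul_assoc, inv_mul_cancel₀ (yv_ne_zero i), one_mul]
  | zero => exact ⟨0, 0, by simp⟩
  | one => exact ⟨0, 1, by simp⟩
  | add x y _ _ hx hy =>
      obtain ⟨N, p, hp⟩ := hx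
      obtain ⟨M, q, hq⟩ := hy
      refine ⟨N + M, p * (∏ i, X i) ^ M + q * (∏ i, X i) ^ N, ?_⟩
      rw [pow_add, map_mul, map_add, map_mul, map_mul, ← hp, ← hq]
      ring
  | neg x _ hx =>
      obtain ⟨N, p, hp⟩ := hx
      exact ⟨N, -p, by rw [map_neg, ← hp]; ring⟩
  | mul x y _ _ hx hy =>
      obtain ⟨N, p, hp⟩ := hx
      obtain ⟨M, q, hq⟩ := hy
      refine ⟨N + M, p * q, ?_⟩
      rw [pow_add, map_mul, map_mul, ← hp, ← hq]
      ring

lemma im_pow_prod_inv_mem {a : ℕ} (N : ℕ) : (im ((∏ i, X i : Rr a) ^ N))⁻¹ ∈ LaurentSub a := by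
  have : (im ((∏ i, X i : Rr a) ^ N))⁻¹ = ∏ i : Fin a, ((yv i)⁻¹) ^ N := by
    rw [map_pow, map_prod, ← Finset.prod_pow, ← Finset.prod_inv_distrib]
    exact Finset.prod_congr rfl fun i _ => by rw [inv_pow]; rfl
  rw [this]
  exact prod_mem fun i _ => pow_mem (yv_inv_mem_laurent i) N

noncomputable def subst {a : ℕ} (i j : Fin a) : Rr a →ₐ[RatFunc ℂ] Rr a :=
  aeval (fun k => if k = i then X j else X k)

lemma subst_X {a : ℕ} (i j k : Fin a) :
    subst i j (X k) = if k = i then X j else X k := aeval_X _ k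

lemma X_sub_X_ne_zero {a : ℕ} {i j : Fin a} (h : i ≠ j) : (X i - X j : Rr a) ≠ 0 :=
  sub_ne_zero.2 fun he => h (X_injective he)

lemma subst_X_sub_X {a : ℕ} (i j : Fin a) : subst i j (X i - X j : Rr a) = 0 := by
  rw [map_sub, subst_X, subst_X, if_pos rfl]
  by_cases h : j = i <;> simp [h]

lemma dvd_sub_subst {a : ℕ} (i j : Fin a) (P : Rr a) :
    (X i - X j : Rr a) ∣ P - subst i j P := by
  induction P using MvPolynomial.induction_on with
  | C r => simp [subst]
  | add p q hp hq =>
      rw [map_add]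
      have : p + q - (subst i j p + subst i j q) = (p - subst i j p) + (q - subst i j q) := by ring
      rw [this]; exact dvd_add hp hq
  | mul_X p k hp =>
      rw [map_mul, subst_X]
      by_cases h : k = i
      · rw [if_pos h, h]
        have : p * X i - subst i j p * X j
            = (p - subst i j p) * X i + subst i j p * (X i - X j) := by ring
        rw [this]
        exact dvd_add (Dvd.dvd.mul_right hp _) (Dvd.dvd.mul_left dvd_rfl _)
      · rw [if_neg h]
        have : p * X k - subst i j p * X k = (p - subst i j p) * X k := by ring
        rw [this]; exact Dvd.dvd.mul_right hp _

lemma dvd_of_subst_eq_zero {a : ℕ} {i j : Fin a} {P : Rr a} (h : subst i j P = 0) :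
    (X i - X j : Rr a) ∣ P := by
  have := dvd_sub_subst i j P
  rwa [h, sub_zero] at this

lemma subst_eq_zero_of_dvd {a : ℕ} {i j : Fin a} {P : Rr a} (h : (X i - X j : Rr a) ∣ P) :
    subst i j P = 0 := by
  obtain ⟨Q, rfl⟩ := h
  rw [map_mul, subst_X_sub_X, zero_mul]

lemma prime_X_sub_X {a : ℕ} {i j : Fin a} (h : i ≠ j) : Prime (X i - X j : Rr a) := by
  refine ⟨X_sub_X_ne_zero h, ?_, ?_⟩
  · intro hu
    have := (hu.map (subst i j)).ne_zero
    rw [subst_X_sub_X] at this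
    exact this rfl
  · intro p q hpq
    have h0 : subst i j p * subst i j q = 0 := by
      rw [← map_mul]; exact subst_eq_zero_of_dvd hpq
    rcases mul_eq_zero.1 h0 with h1 | h1
    · exact Or.inl (dvd_of_subst_eq_zero h1)
    · exact Or.inr (dvd_of_subst_eq_zero h1)

lemma prod_pow_primes_dvd {α : Type*} [CommMonoidWithZero α] [IsCancelMulZero α] {ι' : Type*}
    {s : Finset ι'} {g : ι' → α} {k : ι' → ℕ} {n : α}
    (hp : ∀ i ∈ s, Prime (g i))
    (hna : ∀ i ∈ s, ∀ j ∈ s, i ≠ j → ¬ (g i ∣ g j))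
    (hd : ∀ i ∈ s, g i ^ k i ∣ n) :
    (∏ i ∈ s, g i ^ k i) ∣ n := by
  classical
  induction s using Finset.cons_induction generalizing n with
  | empty => simpa using one_dvd n
  | cons b s hb IH =>
      obtain ⟨m, hm⟩ := hd b (mem_cons_self b s)
      have hmem : ∀ i ∈ s, g i ^ k i ∣ m := by
        intro i hi
        have hprime := hp i (mem_cons.2 (Or.inr hi))
        have hdiv : g i ^ k i ∣ g b ^ k b * m := hm ▸ hd i (mem_cons.2 (Or.inr hi))
        refine hprime.pow_dvd_of_dvd_mul_left _ ?_ hdiv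
        intro hdb
        exact hna i (mem_cons.2 (Or.inr hi)) b (mem_cons_self b s)
          (fun he => hb (he ▸ hi)) (hprime.dvd_of_dvd_pow hdb)
      rw [Finset.prod_cons, hm]
      exact mul_dvd_mul dvd_rfl
        (IH (fun i hi => hp i (mem_cons.2 (Or.inr hi)))
            (fun i hi j hj => hna i (mem_cons.2 (Or.inr hi)) j (mem_cons.2 (Or.inr hj))) hmem)

def Ps (a : ℕ) : Finset (Fin a × Fin a) := (univ ×ˢ univ).filter fun p => p.1 < p.2

lemma mem_Ps {a : ℕ} {p : Fin a × Fin a} : p ∈ Ps a ↔ p.1 < p.2 := by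
  simp [Ps]

noncomputable def Dp (a : ℕ) : Rr a := ∏ p ∈ Ps a, (X p.1 - X p.2)

def bsort {a : ℕ} (σ : Equiv.Perm (Fin a)) (p : Fin a × Fin a) : Fin a × Fin a :=
  if σ p.1 < σ p.2 then (σ p.1, σ p.2) else (σ p.2, σ p.1)

lemma sorted_prod {a : ℕ} (σ : Equiv.Perm (Fin a)) (Q : Finset (Fin a × Fin a))
    (hQ : ∀ p ∈ Q, p.1 < p.2) :
    ∃ c : Rr a, (c = 1 ∨ c = -1) ∧ (Q.image (bsort σ) ⊆ Ps a) ∧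
      (Q.image (bsort σ)).card = Q.card ∧
      ∏ p ∈ Q, (X (σ p.1) - X (σ p.2)) = c * ∏ p ∈ Q.image (bsort σ), (X p.1 - X p.2) := by
  classical
  have hinj : ∀ p ∈ Q, ∀ q ∈ Q, bsort σ p = bsort σ q → p = q := by
    intro p hp q hq h
    have hp' := hQ p hp
    have hq' := hQ q hq
    by_cases h1 : σ p.1 < σ p.2 <;> by_cases h2 : σ q.1 < σ q.2 <;>
        simp only [bsort, h1, h2, if_true, if_false, Prod.mk.injEq] at h <;>
        obtain ⟨e1, e2⟩ := h
    · exact Prod.ext (σ.injective e1) (σ.injective e2)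
    · rw [σ.injective e1, σ.injective e2] at hp'
      exact absurd hq' (lt_asymm hp')
    · rw [σ.injective e1, σ.injective e2] at hp'
      exact absurd hq' (lt_asymm hp')
    · exact Prod.ext (σ.injective e2) (σ.injective e1)
  have hsub : Q.image (bsort σ) ⊆ Ps a := by
    intro q hq
    obtain ⟨p, hp, rfl⟩ := Finset.mem_image.1 hq
    rw [mem_Ps]
    unfold bsort
    by_cases h1 : σ p.1 < σ p.2
    · rw [if_pos h1]; exact h1
    · rw [if_neg h1]
      have : σ p.1 ≠ σ p.2 := fun he => (hQ p hp).ne (σ.injective he)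
      exact lt_of_le_of_ne (not_lt.1 h1) (Ne.symm this)
  have hcard : (Q.image (bsort σ)).card = Q.card := Finset.card_image_of_injOn hinj
  have hfac : ∀ p ∈ Q, (X (σ p.1) - X (σ p.2) : Rr a)
      = (if σ p.1 < σ p.2 then (1 : Rr a) else -1)
        * (X (bsort σ p).1 - X (bsort σ p).2) := by
    intro p _
    by_cases h1 : σ p.1 < σ p.2
    · simp [bsort, h1]
    · simp only [bsort, h1, if_false]
      ring
  refine ⟨∏ p ∈ Q, (if σ p.1 < σ p.2 then (1 : Rr a) else -1), ?_, hsub, hcard, ?_⟩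
  · refine Finset.prod_induction _ (fun x => x = 1 ∨ x = -1) ?_ (Or.inl rfl) ?_
    · rintro x y (rfl | rfl) (rfl | rfl) <;> simp
    · intro p _
      by_cases h1 : σ p.1 < σ p.2 <;> simp [h1]
  · rw [Finset.prod_congr rfl hfac, Finset.prod_mul_distrib, Finset.prod_image hinj]

lemma rename_Dp {a : ℕ} (τ : Equiv.Perm (Fin a)) :
    ∃ c : Rr a, (c = 1 ∨ c = -1) ∧ rename τ (Dp a) = c * Dp a := by
  obtain ⟨c, hc, hsub, hcard, hprod⟩ := sorted_prod τ (Ps a) (fun p hp => mem_Ps.1 hp)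
  have himg : (Ps a).image (bsort τ) = Ps a :=
    Finset.eq_of_subset_of_card_le hsub (by rw [hcard])
  refine ⟨c, hc, ?_⟩
  rw [show rename τ (Dp a) = ∏ p ∈ Ps a, (X (τ p.1) - X (τ p.2)) by
    rw [Dp, map_prod]
    exact Finset.prod_congr rfl fun p _ => by rw [map_sub, rename_X, rename_X]]
  rw [hprod, himg, Dp]

lemma rename_Dp_sq {a : ℕ} (τ : Equiv.Perm (Fin a)) :
    rename τ (Dp a ^ 2) = Dp a ^ 2 := by
  obtain ⟨c, hc, h⟩ := rename_Dp τ
  rw [map_pow, h, mul_pow]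
  rcases hc with rfl | rfl <;> ring

lemma sorted_dvd_Dp {a : ℕ} (σ : Equiv.Perm (Fin a)) (Q : Finset (Fin a × Fin a))
    (hQ : ∀ p ∈ Q, p.1 < p.2) :
    (∏ p ∈ Q, (X (σ p.1) - X (σ p.2) : Rr a)) ∣ Dp a := by
  obtain ⟨c, hc, hsub, _, hprod⟩ := sorted_prod σ Q hQ
  have hdvd : (∏ p ∈ Q.image (bsort σ), (X p.1 - X p.2 : Rr a)) ∣ Dp a :=
    Finset.prod_dvd_prod_of_subset _ _ _ hsub
  rw [hprod]
  rcases hc with rfl | rfl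
  · rwa [one_mul]
  · rw [neg_one_mul, neg_dvd]; exact hdvd

lemma not_dvd_of_ne {a : ℕ} {p q : Fin a × Fin a} (hp : p.1 < p.2) (hq : q.1 < q.2)
    (hne : p ≠ q) : ¬ ((X p.1 - X p.2 : Rr a) ∣ (X q.1 - X q.2)) := by
  intro hdvd
  have h0 := subst_eq_zero_of_dvd hdvd
  rw [map_sub, subst_X, subst_X] at h0
  by_cases h1 : q.1 = p.1 <;> by_cases h2 : q.2 = p.1 <;>
      simp only [h1, h2, if_true, if_false, if_pos, if_neg] at h0
  · exact absurd (h1.trans h2.symm) hq.ne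
  · have e := X_injective (sub_eq_zero.1 h0)
    exact hne (Prod.ext (h1.trans rfl) e.symm).symm
  · have e := X_injective (sub_eq_zero.1 h0)
    rw [e] at hq
    rw [← h2] at hp
    exact absurd hp (lt_asymm hq)
  · exact absurd (X_injective (sub_eq_zero.1 h0)) hq.ne

lemma subst_rename_swap {a : ℕ} (i j : Fin a) (P : Rr a) :
    subst i j (rename (Equiv.swap i j) P) = subst i j P := by
  have hfun : ((fun k => if k = i then (X j : Rr a) else X k) ∘ ⇑(Equiv.swap i j))
      = (fun k => if k = i then (X j : Rr a) else X k) := by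
    funext k
    rcases eq_or_ne k i with rfl | hki
    · simp only [Function.comp_apply, Equiv.swap_apply_left, if_pos rfl]
      by_cases h : j = k <;> simp [h]
    · rcases eq_or_ne k j with rfl | hkj
      · simp [Function.comp_apply, Equiv.swap_apply_right, if_pos rfl, hki]
      · simp [Function.comp_apply, Equiv.swap_apply_of_ne_of_ne hki hkj]
  show (aeval fun k => if k = i then (X j : Rr a) else X k) (rename (Equiv.swap i j) P) = _
  rw [aeval_rename, hfun]
  rfl

lemma two_ne_zero_ratfunc : (2 : RatFunc ℂ) ≠ 0 := by
  have h2 : algebraMap (Polynomial ℂ) (RatFunc ℂ) 2 = (2 : RatFunc ℂ) := map_ofNat _ 2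
  rw [← h2]
  exact RatFunc.algebraMap_ne_zero two_ne_zero

lemma two_ne_zero_R {a : ℕ} : (2 : Rr a) ≠ 0 := by
  intro h
  have h2 : constantCoeff (2 : Rr a) = (2 : RatFunc ℂ) := map_ofNat _ 2
  rw [h, map_zero] at h2
  exact two_ne_zero_ratfunc h2.symm

lemma Dp_ne_zero {a : ℕ} : Dp a ≠ 0 := by
  rw [Dp, Finset.prod_ne_zero_iff]
  exact fun p hp => X_sub_X_ne_zero (mem_Ps.1 hp).ne


lemma Dp_sq_dvd {a : ℕ} {n : Rr a}
    (hd : ∀ p ∈ Ps a, (X p.1 - X p.2 : Rr a) ^ 2 ∣ n) : Dp a ^ 2 ∣ n := by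
  have hDp2 : Dp a ^ 2 = ∏ p ∈ Ps a, (X p.1 - X p.2 : Rr a) ^ 2 := by
    rw [Dp, Finset.prod_pow]
  rw [hDp2]
  have := prod_pow_primes_dvd (g := fun p : Fin a × Fin a => (X p.1 - X p.2 : Rr a))
    (k := fun _ => 2) (s := Ps a) (n := n)
    (fun p hp => prime_X_sub_X (mem_Ps.1 hp).ne)
    (fun p hp q hq hne => not_dvd_of_ne (mem_Ps.1 hp) (mem_Ps.1 hq) hne) hd
  exact this

lemma symm_sum {a : ℕ} (x : FF a) (τ : Equiv.Perm (Fin a)) :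
    permAct τ (∑ σ : Equiv.Perm (Fin a), permAct σ x)
      = ∑ σ : Equiv.Perm (Fin a), permAct σ x := by
  rw [map_sum]
  rw [Finset.sum_congr rfl fun σ _ => permAct_permAct τ σ x]
  exact Fintype.sum_equiv (Equiv.mulLeft τ) _ _ fun σ => rfl
/-- If `f ∈ ℂ(q)[y₁^{±1}, …, y_a^{±1}]` is invariant under `𝔖_s × 𝔖_{a-s} ⊆ 𝔖_a`, then the
full symmetrization `𝔖(f · ∏_{t ≤ s < u} (y_t - q² y_u)/(y_t - y_u))
= ∑_{σ ∈ 𝔖_a} σ·(f · ∏_{t ≤ s < u} (y_t - q² y_u)/(y_t - y_u))`, a priori a rational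
function, is a symmetric Laurent polynomial: it lies in
`ℂ(q)[y₁^{±1}, …, y_a^{±1}]^{𝔖_a}`. -/
theorem symmetrization_of_kernel_is_laurent (a s : ℕ) (ha : 1 ≤ a) (hs : s ≤ a)
    (f : FF a) (hf : f ∈ LaurentSub a)
    (hinv : ∀ σ : Equiv.Perm (Fin a),
      (∀ i : Fin a, (i : ℕ) < s ↔ ((σ i : Fin a) : ℕ) < s) → permAct σ f = f) :
    (∑ σ : Equiv.Perm (Fin a), permAct σ
        (f * ∏ t ∈ Finset.univ.filter (fun t : Fin a => (t : ℕ) < s),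
               ∏ u ∈ Finset.univ.filter (fun u : Fin a => s ≤ (u : ℕ)),
                 (yv t - qv ^ 2 * yv u) / (yv t - yv u)))
        ∈ LaurentSub a ∧
    ∀ τ : Equiv.Perm (Fin a),
      permAct τ (∑ σ : Equiv.Perm (Fin a), permAct σ
        (f * ∏ t ∈ Finset.univ.filter (fun t : Fin a => (t : ℕ) < s),
               ∏ u ∈ Finset.univ.filter (fun u : Fin a => s ≤ (u : ℕ)),
                 (yv t - qv ^ 2 * yv u) / (yv t - yv u)))
      = ∑ σ : Equiv.Perm (Fin a), permAct σ
        (f * ∏ t ∈ Finset.univ.filter (fun t : Fin a => (t : ℕ) < s),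
               ∏ u ∈ Finset.univ.filter (fun u : Fin a => s ≤ (u : ℕ)),
                 (yv t - qv ^ 2 * yv u) / (yv t - yv u)) := by
  classical
  set A : Finset (Fin a) := Finset.univ.filter (fun t : Fin a => (t : ℕ) < s) with hA
  set B : Finset (Fin a) := Finset.univ.filter (fun u : Fin a => s ≤ (u : ℕ)) with hB
  set g : FF a := ∏ t ∈ A, ∏ u ∈ B, (yv t - qv ^ 2 * yv u) / (yv t - yv u) with hgdef
  have hAB : ∀ p ∈ A ×ˢ B, p.1 < p.2 := by
    intro p hp
    rw [Finset.mem_product] at hp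
    have h1 := (Finset.mem_filter.1 hp.1).2
    have h2 := (Finset.mem_filter.1 hp.2).2
    exact Fin.lt_def.2 (lt_of_lt_of_le h1 h2)
  have hgAB : g = ∏ p ∈ A ×ˢ B, (yv p.1 - qv ^ 2 * yv p.2) / (yv p.1 - yv p.2) := by
    rw [hgdef]
    exact (Finset.prod_product' A B fun t u => (yv t - qv ^ 2 * yv u) / (yv t - yv u)).symm
  obtain ⟨N, p', hp'⟩ := exists_clear_denom hf
  set mp : Rr a := (∏ i, X i) ^ N with hmp
  have hmp_ne : im mp ≠ 0 := by
    rw [ne_eq, map_eq_zero_iff _ im_inj]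
    exact pow_ne_zero _ (Finset.prod_ne_zero_iff.2 fun i _ => X_ne_zero i)
  have hf_eq : f = im p' / im mp := (eq_div_iff hmp_ne).2 hp'
  have hmp_sym : ∀ σ : Equiv.Perm (Fin a), rename σ mp = mp := by
    intro σ
    rw [hmp, map_pow, map_prod]
    congr 1
    rw [Finset.prod_congr rfl fun i (_ : i ∈ univ) => rename_X σ i]
    exact Equiv.prod_comp σ fun i => (X i : Rr a)
  have hgσ : ∀ σ : Equiv.Perm (Fin a), permAct σ g
      = ∏ p ∈ A ×ˢ B, (yv (σ p.1) - qv ^ 2 * yv (σ p.2)) / (yv (σ p.1) - yv (σ p.2)) := by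
    intro σ
    rw [hgAB, map_prod]
    refine Finset.prod_congr rfl fun p _ => ?_
    rw [map_div₀, map_sub, map_sub, map_mul, map_pow, permAct_qv]
    simp only [permAct_yv]
  have hterm : ∀ σ : Equiv.Perm (Fin a),
      ∃ W : Rr a, permAct σ (im p' * g) * im (Dp a) = im W := by
    intro σ
    have hABσ : ∀ p ∈ A ×ˢ B, σ p.1 ≠ σ p.2 :=
      fun p hp h => (hAB p hp).ne (σ.injective h)
    obtain ⟨E, hE⟩ := sorted_dvd_Dp σ (A ×ˢ B) hAB
    have hDσne : im (∏ p ∈ A ×ˢ B, (X (σ p.1) - X (σ p.2) : Rr a)) ≠ 0 := by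
      rw [ne_eq, map_eq_zero_iff _ im_inj]
      exact Finset.prod_ne_zero_iff.2 fun p hp => X_sub_X_ne_zero (hABσ p hp)
    have hnum : permAct σ g
        = im (∏ p ∈ A ×ˢ B, (X (σ p.1) - C RatFunc.X ^ 2 * X (σ p.2) : Rr a))
          / im (∏ p ∈ A ×ˢ B, (X (σ p.1) - X (σ p.2) : Rr a)) := by
      rw [hgσ σ, map_prod, map_prod, ← Finset.prod_div_distrib]
      refine Finset.prod_congr rfl fun p _ => ?_
      rw [map_sub, map_sub, map_mul, map_pow]
      rfl
    refine ⟨rename σ p' *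
      ((∏ p ∈ A ×ˢ B, (X (σ p.1) - C RatFunc.X ^ 2 * X (σ p.2) : Rr a)) * E), ?_⟩
    have habs : ∀ x n d e : FF a, d ≠ 0 → x * (n / d) * (d * e) = x * (n * e) := by
      intro x n d e hd
      field_simp
    have hkey : permAct σ (im p' * g) * im (Dp a)
        = im (rename σ p')
          * (im (∏ p ∈ A ×ˢ B, (X (σ p.1) - C RatFunc.X ^ 2 * X (σ p.2) : Rr a))
             / im (∏ p ∈ A ×ˢ B, (X (σ p.1) - X (σ p.2) : Rr a)))
          * (im (∏ p ∈ A ×ˢ B, (X (σ p.1) - X (σ p.2) : Rr a)) * im E) := by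
      rw [map_mul, permAct_im, hnum, hE, map_mul]
    rw [hkey, habs _ _ _ _ hDσne, map_mul, map_mul]
  set T : FF a := ∑ σ : Equiv.Perm (Fin a), permAct σ (im p' * g) with hT
  have hTrange : ∃ P₁ : Rr a, T * im (Dp a) = im P₁ := by
    choose W hW using hterm
    refine ⟨∑ σ : Equiv.Perm (Fin a), W σ, ?_⟩
    rw [hT, Finset.sum_mul, map_sum]
    exact Finset.sum_congr rfl fun σ _ => hW σ
  obtain ⟨P₁, hP₁⟩ := hTrange
  have hTsym : ∀ τ : Equiv.Perm (Fin a), permAct τ T = T := fun τ => symm_sum _ τ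
  set P : Rr a := P₁ * Dp a with hPdef
  have hP : im P = T * im (Dp a ^ 2) := by
    rw [hPdef, map_mul, ← hP₁, map_pow]
    ring
  have hPsym : ∀ τ : Equiv.Perm (Fin a), rename τ P = P := by
    intro τ
    apply im_inj
    rw [← permAct_im, hP, map_mul, hTsym, permAct_im, rename_Dp_sq, ← hP]
  have hsq : ∀ p ∈ Ps a, ((X p.1 - X p.2 : Rr a)) ^ 2 ∣ P := by
    intro p hp
    have hlt := mem_Ps.1 hp
    have h1 : (X p.1 - X p.2 : Rr a) ∣ P := by
      rw [hPdef]
      exact Dvd.dvd.mul_left (Finset.dvd_prod_of_mem _ hp) P₁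
    obtain ⟨Q, hQ⟩ := h1
    have hsw := hPsym (Equiv.swap p.1 p.2)
    rw [hQ, map_mul, map_sub, rename_X, rename_X, Equiv.swap_apply_left,
      Equiv.swap_apply_right] at hsw
    have hzero : (X p.1 - X p.2 : Rr a) * (Q + rename (Equiv.swap p.1 p.2) Q) = 0 := by
      linear_combination -hsw
    have hQneg : rename (Equiv.swap p.1 p.2) Q = -Q := by
      rcases mul_eq_zero.1 hzero with h | h
      · exact absurd h (X_sub_X_ne_zero hlt.ne)
      · rw [add_comm] at h
        exact eq_neg_of_add_eq_zero_left h
    have hsubQ : subst p.1 p.2 Q = 0 := by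
      have h2 : subst p.1 p.2 Q = - subst p.1 p.2 Q := by
        calc subst p.1 p.2 Q = subst p.1 p.2 (rename (Equiv.swap p.1 p.2) Q) :=
              (subst_rename_swap _ _ _).symm
          _ = subst p.1 p.2 (-Q) := by rw [hQneg]
          _ = - subst p.1 p.2 Q := map_neg _ _
      have h3 : (2 : Rr a) * subst p.1 p.2 Q = 0 := by linear_combination h2
      exact (mul_eq_zero.1 h3).resolve_left two_ne_zero_R
    obtain ⟨Q', hQ'⟩ := dvd_of_subst_eq_zero hsubQ
    exact ⟨Q', by rw [hQ, hQ', pow_two]; ring⟩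
  have hDpsq : Dp a ^ 2 ∣ P := Dp_sq_dvd hsq
  obtain ⟨P₂, hP₂⟩ := hDpsq
  have hDpsq_ne : im (Dp a ^ 2) ≠ 0 := by
    rw [ne_eq, map_eq_zero_iff _ im_inj]
    exact pow_ne_zero _ Dp_ne_zero
  have hTP₂ : T = im P₂ := by
    refine mul_right_cancel₀ hDpsq_ne ?_
    rw [← hP, hP₂, map_mul]
    ring
  have hSplit : ∀ σ : Equiv.Perm (Fin a),
      permAct σ (f * g) = permAct σ (im p' * g) / im mp := by
    intro σ
    rw [hf_eq, div_mul_eq_mul_div, map_div₀, permAct_im, hmp_sym σ]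
  have hSsum : (∑ σ : Equiv.Perm (Fin a), permAct σ (f * g)) = T / im mp := by
    rw [Finset.sum_congr rfl fun σ _ => hSplit σ, ← Finset.sum_div]
  constructor
  · rw [hSsum, hTP₂, div_eq_mul_inv]
    exact mul_mem (im_mem_laurent P₂) (im_pow_prod_inv_mem N)
  · intro τ
    exact symm_sum _ τ
end
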